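/- arXiv:2408.06600 — 6 statements merged into one kernel-verified Lean document; each statement's English description precedes it below -/
import Mathlib

section
/- Let $A$ be a real $d \times n$ matrix, $f \in \mathbb{R}^d$, $W_1,\dots,W_m$ real $n \times n$ matrices with $W_i^T W_i = I$, $\gamma_i > 0$, $\lambda > 0$, $0 < p < 1$, $\alpha \in [0,1)$, $\beta \in (0,(\sqrt{5}-1)/2)$. Let $(u^k),(\bar{u}^k)$ in $\mathbb{R}^n$ and $(z^k),(\bar{z}^k)$ in $(\mathbb{R}^n)^m$ satisfy, for all $k \ge 0$: $z^{k+1}$ globally minimizes $z \mapsto \lambda\sum_{i,j}|z_{i,j}|^p + \tfrac{1}{2}\sum_i \gamma_i\|W_i\bar{u}^k - z_i\|_2^2$; $\bar{z}^{k+1} = z^{k+1} + \alpha(z^{k+1}-\bar{z}^k)$; $(A^TA + \sum_i \gamma_i W_i^TW_i)u^{k+1} = A^Tf + \sum_i \gamma_i W_i^T\bar{z}_i^{k+1}$; $\bar{u}^{k+1} = u^{k+1} + \beta(u^{k+1}-\bar{u}^k)$. If $u^k \to u^*$, $z^k \to z^*$, $\bar{u}^k \to \bar{u}^*$ and $\bar{z}^k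 \to \bar{z}^*$, then $\bar{u}^* = u^*$, $\bar{z}^* = z^*$, the point $z^*$ globally minimizes $z \mapsto \lambda\sum_{i,j}|z_{i,j}|^p + \tfrac{1}{2}\sum_i \gamma_i\|W_i u^* - z_i\|_2^2$, and $A^T(Au^*-f) + \sum_i \gamma_i W_i^T(W_iu^* - z_i^*) = 0$. -/
open Matrix Filter Topology


private lemma sum_mulVec_aux {ι N : Type*} [Fintype N] [DecidableEq N]
    (s : Finset ι) (M : ι → Matrix N N ℝ) (v : N → ℝ) :
    (∑ i ∈ s, M i).mulVec v = ∑ i ∈ s, (M i).mulVec v := by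
  induction s using Finset.cons_induction with
  | empty => simp [Matrix.zero_mulVec]
  | cons a s ha ih => simp [Matrix.add_mulVec, ih]

/-- Theorem 1 (limit form): if the inertial `L_p` half-quadratic splitting
iterates all converge, then `ū* = u*`, `z̄* = z*`, the limit `z*` globally
minimizes the `z`-subproblem at `u*`, and `u*` satisfies the stationarity
condition `Aᵀ(Au* - f) + ∑ᵢ γᵢ Wᵢᵀ(Wᵢu* - zᵢ*) = 0`. -/
theorem ihqsp_limit_is_stationary
    {d n m : ℕ}
    (A : Matrix (Fin d) (Fin n) ℝ) (f : Fin d → ℝ)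
    (W : Fin m → Matrix (Fin n) (Fin n) ℝ)
    (hW : ∀ i, (W i)ᵀ * W i = 1)
    (γ : Fin m → ℝ) (hγ : ∀ i, 0 < γ i)
    (lam p α β : ℝ) (hlam : 0 < lam) (hp0 : 0 < p) (hp1 : p < 1)
    (hα0 : 0 ≤ α) (hα1 : α < 1)
    (hβ0 : 0 < β) (hβ1 : β < (Real.sqrt 5 - 1) / 2)
    (u ubar : ℕ → Fin n → ℝ)
    (z zbar : ℕ → Fin m → Fin n → ℝ)
    -- z-update: z^{k+1} globally minimizes the z-subproblem at ū^k
    (hzmin : ∀ k : ℕ, ∀ w : Fin m → Fin n → ℝ,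
      lam * (∑ i, ∑ j, |z (k + 1) i j| ^ p)
          + ((1 : ℝ) / 2) * ∑ i, γ i * ∑ j, ((W i).mulVec (ubar k) j - z (k + 1) i j) ^ 2
        ≤ lam * (∑ i, ∑ j, |w i j| ^ p)
          + ((1 : ℝ) / 2) * ∑ i, γ i * ∑ j, ((W i).mulVec (ubar k) j - w i j) ^ 2)
    -- z-inertia step
    (hzbar : ∀ k : ℕ, zbar (k + 1) = z (k + 1) + α • (z (k + 1) - zbar k))
    -- u-update: normal equation
    (humin : ∀ k : ℕ,
      (Aᵀ * A + ∑ i, γ i • ((W i)ᵀ * W i)).mulVec (u (k + 1))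
        = Aᵀ.mulVec f + ∑ i, γ i • (W i)ᵀ.mulVec (zbar (k + 1) i))
    -- u-inertia step
    (hubar : ∀ k : ℕ, ubar (k + 1) = u (k + 1) + β • (u (k + 1) - ubar k))
    (ustar ubarstar : Fin n → ℝ) (zstar zbarstar : Fin m → Fin n → ℝ)
    (hu : Tendsto u atTop (𝓝 ustar))
    (hz : Tendsto z atTop (𝓝 zstar))
    (hubarlim : Tendsto ubar atTop (𝓝 ubarstar))
    (hzbarlim : Tendsto zbar atTop (𝓝 zbarstar)) :
    ubarstar = ustar ∧ zbarstar = zstar ∧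
    (∀ w : Fin m → Fin n → ℝ,
      lam * (∑ i, ∑ j, |zstar i j| ^ p)
          + ((1 : ℝ) / 2) * ∑ i, γ i * ∑ j, ((W i).mulVec ustar j - zstar i j) ^ 2
        ≤ lam * (∑ i, ∑ j, |w i j| ^ p)
          + ((1 : ℝ) / 2) * ∑ i, γ i * ∑ j, ((W i).mulVec ustar j - w i j) ^ 2) ∧
    Aᵀ.mulVec (A.mulVec ustar - f)
      + ∑ i, γ i • (W i)ᵀ.mulVec ((W i).mulVec ustar - zstar i) = 0 := by
  -- componentwise limits helper
  have hu1 : Tendsto (fun k => u (k+1)) atTop (𝓝 ustar) := hu.comp (tendsto_add_atTop_nat 1)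
  have hz1 : Tendsto (fun k => z (k+1)) atTop (𝓝 zstar) := hz.comp (tendsto_add_atTop_nat 1)
  have hub1 : Tendsto (fun k => ubar (k+1)) atTop (𝓝 ubarstar) :=
    hubarlim.comp (tendsto_add_atTop_nat 1)
  have hzb1 : Tendsto (fun k => zbar (k+1)) atTop (𝓝 zbarstar) :=
    hzbarlim.comp (tendsto_add_atTop_nat 1)
  -- ubarstar = ustar
  have hueq : ubarstar = ustar + β • (ustar - ubarstar) := by
    refine tendsto_nhds_unique ?_ (hu1.add ((hu1.sub hubarlim).const_smul β))
    simpa only [hubar] using hub1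
  have hubeq : ubarstar = ustar := by
    funext j
    have h := congrFun hueq j
    simp only [Pi.add_apply, Pi.smul_apply, Pi.sub_apply, smul_eq_mul] at h
    nlinarith [hβ0.le]
  -- zbarstar = zstar
  have hzeq : zbarstar = zstar + α • (zstar - zbarstar) := by
    refine tendsto_nhds_unique ?_ (hz1.add ((hz1.sub hzbarlim).const_smul α))
    simpa only [hzbar] using hzb1
  have hzbeq : zbarstar = zstar := by
    funext i j
    have h := congrFun (congrFun hzeq i) j
    simp only [Pi.add_apply, Pi.smul_apply, Pi.sub_apply, smul_eq_mul] at h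
    nlinarith [hα0]
  -- componentwise tendsto
  have hzc : ∀ i j, Tendsto (fun k => z (k+1) i j) atTop (𝓝 (zstar i j)) := by
    intro i j
    exact tendsto_pi_nhds.1 (tendsto_pi_nhds.1 hz1 i) j
  have hzbc : ∀ i, Tendsto (fun k => zbar (k+1) i) atTop (𝓝 (zstar i)) := by
    intro i
    simpa [hzbeq] using tendsto_pi_nhds.1 hzb1 i
  have hubc : ∀ l, Tendsto (fun k => ubar k l) atTop (𝓝 (ustar l)) := by
    intro l
    simpa [hubeq] using tendsto_pi_nhds.1 hubarlim l
  have hmvc : ∀ i j, Tendsto (fun k => (W i).mulVec (ubar k) j) atTop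
      (𝓝 ((W i).mulVec ustar j)) := by
    intro i j
    simp only [Matrix.mulVec, dotProduct]
    exact tendsto_finset_sum _ fun l _ => (hubc l).const_mul _
  have habsp : Continuous fun x : ℝ => |x| ^ p := by
    rw [continuous_iff_continuousAt]
    intro x
    exact (Real.continuousAt_rpow_const _ _ (Or.inr hp0.le)).comp continuous_abs.continuousAt
  -- z-subproblem minimality at the limit
  have hmin : ∀ w : Fin m → Fin n → ℝ,
      lam * (∑ i, ∑ j, |zstar i j| ^ p)
          + ((1 : ℝ) / 2) * ∑ i, γ i * ∑ j, ((W i).mulVec ustar j - zstar i j) ^ 2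
        ≤ lam * (∑ i, ∑ j, |w i j| ^ p)
          + ((1 : ℝ) / 2) * ∑ i, γ i * ∑ j, ((W i).mulVec ustar j - w i j) ^ 2 := by
    intro w
    have hL : Tendsto (fun k =>
        lam * (∑ i, ∑ j, |z (k+1) i j| ^ p)
          + ((1 : ℝ) / 2) * ∑ i, γ i * ∑ j, ((W i).mulVec (ubar k) j - z (k+1) i j) ^ 2)
        atTop (𝓝 (lam * (∑ i, ∑ j, |zstar i j| ^ p)
          + ((1 : ℝ) / 2) * ∑ i, γ i * ∑ j, ((W i).mulVec ustar j - zstar i j) ^ 2)) := by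
      refine Tendsto.add (Tendsto.const_mul _ ?_) (Tendsto.const_mul _ ?_)
      · exact tendsto_finset_sum _ fun i _ => tendsto_finset_sum _ fun j _ =>
          (habsp.tendsto _).comp (hzc i j)
      · exact tendsto_finset_sum _ fun i _ => Tendsto.const_mul _ <|
          tendsto_finset_sum _ fun j _ => ((hmvc i j).sub (hzc i j)).pow 2
    have hR : Tendsto (fun k =>
        lam * (∑ i, ∑ j, |w i j| ^ p)
          + ((1 : ℝ) / 2) * ∑ i, γ i * ∑ j, ((W i).mulVec (ubar k) j - w i j) ^ 2)
        atTop (𝓝 (lam * (∑ i, ∑ j, |w i j| ^ p)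
          + ((1 : ℝ) / 2) * ∑ i, γ i * ∑ j, ((W i).mulVec ustar j - w i j) ^ 2)) := by
      refine Tendsto.add tendsto_const_nhds (Tendsto.const_mul _ ?_)
      exact tendsto_finset_sum _ fun i _ => Tendsto.const_mul _ <|
        tendsto_finset_sum _ fun j _ => ((hmvc i j).sub tendsto_const_nhds).pow 2
    exact le_of_tendsto_of_tendsto' hL hR fun k => hzmin k w
  -- stationarity
  have hMeq : (Aᵀ * A + ∑ i, γ i • ((W i)ᵀ * W i)).mulVec ustar
      = Aᵀ.mulVec f + ∑ i, γ i • (W i)ᵀ.mulVec (zstar i) := by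
    have hMcont : Continuous fun v : Fin n → ℝ =>
        (Aᵀ * A + ∑ i, γ i • ((W i)ᵀ * W i)).mulVec v := by
      simp only [← Matrix.mulVecLin_apply]
      exact LinearMap.continuous_of_finiteDimensional _
    have hLt : Tendsto (fun k => (Aᵀ * A + ∑ i, γ i • ((W i)ᵀ * W i)).mulVec (u (k+1)))
        atTop (𝓝 ((Aᵀ * A + ∑ i, γ i • ((W i)ᵀ * W i)).mulVec ustar)) :=
      (hMcont.tendsto _).comp hu1
    have hRt : Tendsto (fun k => Aᵀ.mulVec f + ∑ i, γ i • (W i)ᵀ.mulVec (zbar (k+1) i))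
        atTop (𝓝 (Aᵀ.mulVec f + ∑ i, γ i • (W i)ᵀ.mulVec (zstar i))) := by
      refine Tendsto.add tendsto_const_nhds (tendsto_finset_sum _ fun i _ => ?_)
      have hWc : Continuous fun v : Fin n → ℝ => (W i)ᵀ.mulVec v := by
        simp only [← Matrix.mulVecLin_apply]
        exact LinearMap.continuous_of_finiteDimensional _
      exact (((hWc.tendsto _).comp (hzbc i)).const_smul (γ i))
    refine tendsto_nhds_unique ?_ hRt
    simpa only [humin] using hLt
  refine ⟨hubeq, hzbeq, hmin, ?_⟩
  have hsum : (∑ i, γ i • ((W i)ᵀ * W i)).mulVec ustar = ∑ i, γ i • ustar := by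
    rw [sum_mulVec_aux]
    refine Finset.sum_congr rfl fun i _ => ?_
    rw [Matrix.smul_mulVec, hW i, Matrix.one_mulVec]
  have heq' : (Aᵀ * A).mulVec ustar + ∑ i, γ i • ustar
      = Aᵀ.mulVec f + ∑ i, γ i • (W i)ᵀ.mulVec (zstar i) := by
    rw [← hsum, ← Matrix.add_mulVec]
    exact hMeq
  have hterm : ∀ i, (W i)ᵀ.mulVec ((W i).mulVec ustar - zstar i)
      = ustar - (W i)ᵀ.mulVec (zstar i) := by
    intro i
    rw [Matrix.mulVec_sub, Matrix.mulVec_mulVec, hW i, Matrix.one_mulVec]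
  have hA : Aᵀ.mulVec (A.mulVec ustar - f)
      = (Aᵀ * A).mulVec ustar - Aᵀ.mulVec f := by
    rw [Matrix.mulVec_sub, Matrix.mulVec_mulVec]
  calc Aᵀ.mulVec (A.mulVec ustar - f)
        + ∑ i, γ i • (W i)ᵀ.mulVec ((W i).mulVec ustar - zstar i)
      = ((Aᵀ * A).mulVec ustar - Aᵀ.mulVec f)
        + ((∑ i, γ i • ustar) - ∑ i, γ i • (W i)ᵀ.mulVec (zstar i)) := by
        rw [hA]
        congr 1
        simp only [hterm, smul_sub, Finset.sum_sub_distrib]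
    _ = ((Aᵀ * A).mulVec ustar + ∑ i, γ i • ustar)
        - (Aᵀ.mulVec f + ∑ i, γ i • (W i)ᵀ.mulVec (zstar i)) := by
        rw [sub_add_sub_comm]
    _ = 0 := by rw [heq', sub_self]
end

section
/- Let $0 < p < 1$, $\eta > 0$, $\rho = (2(1-p)/\eta)^{1/(2-p)}$ and $\tau = \rho + p\rho^{p-1}/\eta$. Then $\rho^p + \tfrac{\eta}{2}(\rho - \tau)^2 = \tfrac{\eta}{2}\tau^2$; that is, at $t = \tau$ the objective $\varphi(x) = |x|^p + \tfrac{\eta}{2}(x-\tau)^2$ takes the same value at $x = \rho$ as at $x = 0$. -/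
/-- With `ρ = (2(1-p)/η)^{1/(2-p)}` and `τ = ρ + pρ^{p-1}/η`, at `t = τ` the
objective `φ(x) = |x|^p + (η/2)(x - τ)²` takes the same value at `x = ρ` as at
`x = 0`, i.e. `ρ^p + (η/2)(ρ - τ)² = (η/2)τ²`. -/
theorem prox_lp_threshold_tie
    (p η ρ τ : ℝ) (hp0 : 0 < p) (hp1 : p < 1) (hη : 0 < η)
    (hρ : ρ = (2 * (1 - p) / η) ^ ((1 : ℝ) / (2 - p)))
    (hτ : τ = ρ + p * ρ ^ (p - 1) / η) :
    ρ ^ p + η / 2 * (ρ - τ) ^ 2 = η / 2 * τ ^ 2 := by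
  have h1p : (0:ℝ) < 1 - p := by linarith
  have hb : (0:ℝ) < 2 * (1 - p) / η := by positivity
  have h2p : (2:ℝ) - p ≠ 0 := by linarith
  have hρpos : 0 < ρ := by rw [hρ]; positivity
  have hkey : ρ ^ ((2:ℝ) - p) = 2 * (1 - p) / η := by
    rw [hρ, ← Real.rpow_mul hb.le, one_div, inv_mul_cancel₀ h2p, Real.rpow_one]
  have key2 : η * ρ ^ 2 = 2 * (1 - p) * ρ ^ p := by
    have : ρ ^ ((2:ℝ) - p) * ρ ^ p = ρ ^ 2 := by
      rw [← Real.rpow_add hρpos, sub_add_cancel, show ((2:ℝ)) = ((2:ℕ):ℝ) by norm_num,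
        Real.rpow_natCast]
    rw [← this, hkey]
    field_simp
  have key3 : ρ * ρ ^ (p - 1) = ρ ^ p := by
    rw [mul_comm, ← Real.rpow_add_one hρpos.ne', sub_add_cancel]
  subst hτ
  have hinv : η * η⁻¹ = 1 := mul_inv_cancel₀ hη.ne'
  linear_combination (-(1:ℝ)/2) * key2 - p * key3 - (p * ρ * ρ ^ (p - 1)) * hinv
end

section
/- Let $0 < p < 1$, $\eta > 0$, $\rho = (2(1-p)/\eta)^{1/(2-p)}$ and $\tau = \rho + p\rho^{p-1}/\eta$. For every $t \in \mathbb{R}$ with $|t| < \tau$, the point $x = 0$ is the unique global minimizer over $\mathbb{R}$ of $\varphi(x) = |x|^p + \tfrac{\eta}{2}(x-t)^2$; that is, $\mathrm{prox}_{p,\eta}(t) = 0$. -/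
/-- Bernoulli-type inequality for exponents in `(-1, 0)`: for `u > 0` and
`0 < p < 1`, `1 + (p-1)*(u-1) ≤ u ^ (p-1)`. -/
lemma bern_aux {p : ℝ} (hp0 : 0 < p) (hp1 : p < 1) {u : ℝ} (hu : 0 < u) :
    1 + (p - 1) * (u - 1) ≤ u ^ (p - 1) := by
  have hd : (-1 : ℝ) ≤ u - 1 := by linarith
  have h1 : (1 + (u - 1)) ^ (1 - p) ≤ 1 + (1 - p) * (u - 1) :=
    rpow_one_add_le_one_add_mul_self hd (by linarith) (by linarith)
  have hu1 : (1 : ℝ) + (u - 1) = u := by ring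
  rw [hu1] at h1
  have hupos : 0 < u ^ (1 - p) := Real.rpow_pos_of_pos hu _
  have hq : 0 < 1 + (1 - p) * (u - 1) := lt_of_lt_of_le hupos h1
  have hinv : u ^ (p - 1) = (u ^ (1 - p))⁻¹ := by
    rw [← Real.rpow_neg hu.le]; ring_nf
  rw [hinv]
  have h2 : (1 + (1 - p) * (u - 1))⁻¹ ≤ (u ^ (1 - p))⁻¹ :=
    inv_anti₀ hupos h1
  refine le_trans ?_ h2
  rw [inv_eq_one_div, le_div_iff₀ hq]
  nlinarith [sq_nonneg ((1 - p) * (u - 1))]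

/-- With `ρ = (2(1-p)/η)^{1/(2-p)}` and `τ = ρ + pρ^{p-1}/η`: for `|t| < τ`,
the point `x = 0` is the unique global minimizer of
`φ(x) = |x|^p + (η/2)(x - t)²`, i.e. `prox_{p,η}(t) = 0`. -/
theorem prox_lp_zero_branch
    (p η ρ τ : ℝ) (hp0 : 0 < p) (hp1 : p < 1) (hη : 0 < η)
    (hρ : ρ = (2 * (1 - p) / η) ^ ((1 : ℝ) / (2 - p)))
    (hτ : τ = ρ + p * ρ ^ (p - 1) / η)
    (t : ℝ) (ht : |t| < τ) :
    (∀ x : ℝ, |(0 : ℝ)| ^ p + η / 2 * ((0 : ℝ) - t) ^ 2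
        ≤ |x| ^ p + η / 2 * (x - t) ^ 2) ∧
    ∀ x : ℝ, (∀ y : ℝ, |x| ^ p + η / 2 * (x - t) ^ 2
        ≤ |y| ^ p + η / 2 * (y - t) ^ 2) → x = 0 := by
  have hb : 0 < 2 * (1 - p) / η := div_pos (by linarith) hη
  have hρpos : 0 < ρ := hρ ▸ Real.rpow_pos_of_pos hb _
  have h2p : (2 : ℝ) - p ≠ 0 := by linarith
  have hρ2p : ρ ^ ((2 : ℝ) - p) = 2 * (1 - p) / η := by
    rw [hρ, ← Real.rpow_mul hb.le, one_div, inv_mul_cancel₀ h2p, Real.rpow_one]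
  set r : ℝ := ρ ^ (p - 2) with hr
  have hrpos : 0 < r := Real.rpow_pos_of_pos hρpos _
  have hid : (1 - p) * r = η / 2 := by
    have h1 : r = (ρ ^ ((2 : ℝ) - p))⁻¹ := by
      rw [hr, ← Real.rpow_neg hρpos.le]; ring_nf
    have h1p : (1 : ℝ) - p ≠ 0 := by linarith
    rw [h1, hρ2p]
    field_simp
  have hρ1 : ρ ^ (p - 1) = r * ρ := by
    have := Real.rpow_add_one hρpos.ne' (p - 2)
    rw [show p - 2 + 1 = p - 1 by ring] at this
    rw [this]
  have hητ : η * τ = r * ρ + η / 2 * ρ := by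
    rw [hτ, hρ1]
    field_simp
    linear_combination (-2) * hid
  -- tangent line bound: for s > 0, η τ ≤ s^(p-1) + (η/2) s
  have tang : ∀ s : ℝ, 0 < s → η * τ ≤ s ^ (p - 1) + η / 2 * s := by
    intro s hs
    have hb1 := bern_aux hp0 hp1 (div_pos hs hρpos)
    have hdiv : (s / ρ) ^ (p - 1) = s ^ (p - 1) / ρ ^ (p - 1) :=
      Real.div_rpow hs.le hρpos.le _
    rw [hdiv, hρ1] at hb1
    have h3 : (r * ρ) * (1 + (p - 1) * (s / ρ - 1)) ≤ s ^ (p - 1) := by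
      have := mul_le_mul_of_nonneg_left hb1 (mul_pos hrpos hρpos).le
      rwa [mul_div_cancel₀ _ (mul_pos hrpos hρpos).ne'] at this
    have h4 : (r * ρ) * (1 + (p - 1) * (s / ρ - 1))
        = r * ρ - η / 2 * s + η / 2 * ρ := by
      field_simp
      linear_combination (-2 * (s - ρ)) * hid
    rw [h4] at h3
    linarith [hητ]
  have h0 : |(0 : ℝ)| ^ p + η / 2 * ((0 : ℝ) - t) ^ 2 = η / 2 * t ^ 2 := by
    rw [abs_zero, Real.zero_rpow hp0.ne']; ring
  -- strict inequality for x ≠ 0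
  have key : ∀ x : ℝ, x ≠ 0 → η / 2 * t ^ 2 < |x| ^ p + η / 2 * (x - t) ^ 2 := by
    intro x hx
    have hs : 0 < |x| := abs_pos.mpr hx
    have h1 := tang |x| hs
    have hxp : |x| ^ p = |x| ^ (p - 1) * |x| := by
      have := Real.rpow_add_one hs.ne' (p - 1)
      rw [show p - 1 + 1 = p by ring] at this
      rw [this]
    have h2 : t * x ≤ |t| * |x| := by
      calc t * x ≤ |t * x| := le_abs_self _
        _ = |t| * |x| := abs_mul _ _
    have h3 : η * (t * x) < η * (τ * |x|) := by
      apply mul_lt_mul_of_pos_left _ hη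
      calc t * x ≤ |t| * |x| := h2
        _ < τ * |x| := mul_lt_mul_of_pos_right ht hs
    have h5 : η * τ * |x| ≤ |x| ^ (p - 1) * |x| + η / 2 * |x| ^ 2 := by
      nlinarith [mul_le_mul_of_nonneg_right h1 hs.le]
    have hx2 : x ^ 2 = |x| ^ 2 := (sq_abs x).symm
    nlinarith [h3, h5, hxp, hx2]
  constructor
  · intro x
    rcases eq_or_ne x 0 with rfl | hx
    · exact le_refl _
    · rw [h0]; exact (key x hx).le
  · intro x hmin
    by_contra hx
    have h1 := hmin 0
    rw [h0] at h1
    exact absurd h1 (not_le.mpr (key x hx))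
end

section
/- Let $0 < p < 1$, $\eta > 0$, $\rho = (2(1-p)/\eta)^{1/(2-p)}$ and $\tau = \rho + p\rho^{p-1}/\eta$. For $t = \tau$, the set of global minimizers over $\mathbb{R}$ of $\varphi(x) = |x|^p + \tfrac{\eta}{2}(x-\tau)^2$ is exactly $\{0, \rho\}$. -/
open Real

lemma core_lt {p u : ℝ} (hp0 : 0 < p) (hp1 : p < 1) (hu : 0 < u) (hu1 : u ≠ 1) :
    1 + p * (u - 1) - (1 - p) * (u - 1) ^ 2 < u ^ p := by
  set D : ℝ := 1 + (1 - p) * (u - 1) with hD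
  have hDpos : 0 < D := by nlinarith
  have hB : u ^ (1 - p) < D := by
    have h := rpow_one_add_lt_one_add_mul_self (s := u - 1) (by linarith)
      (by intro h; apply hu1; linarith) (by linarith : (0:ℝ) < 1 - p) (by linarith)
    have : (1 : ℝ) + (u - 1) = u := by ring
    rwa [this] at h
  have hup : 0 < u ^ p := Real.rpow_pos_of_pos hu p
  have hsplit : u ^ p * u ^ (1 - p) = u := by
    rw [← Real.rpow_add hu]; norm_num
  have h1 : u < u ^ p * D := by
    calc u = u ^ p * u ^ (1 - p) := hsplit.symm
      _ < u ^ p * D := by exact mul_lt_mul_of_pos_left hB hup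
  have h2 : (1 + p * (u - 1) - (1 - p) * (u - 1) ^ 2) * D ≤ u := by
    have hid : u - (1 + p * (u - 1) - (1 - p) * (u - 1) ^ 2) * D
        = (1 - p) ^ 2 * (u - 1) ^ 2 * u := by rw [hD]; ring
    nlinarith [mul_nonneg (mul_nonneg (sq_nonneg (1 - p)) (sq_nonneg (u - 1))) hu.le]
  exact lt_of_mul_lt_mul_right (h2.trans_lt h1) hDpos.le

lemma core_le {p u : ℝ} (hp0 : 0 < p) (hp1 : p < 1) (hu : 0 < u) :
    1 + p * (u - 1) - (1 - p) * (u - 1) ^ 2 ≤ u ^ p := by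
  rcases eq_or_ne u 1 with rfl | h
  · simp
  · exact (core_lt hp0 hp1 hu h).le

/-- With `ρ = (2(1-p)/η)^{1/(2-p)}` and `τ = ρ + pρ^{p-1}/η`: for `t = τ`,
the set of global minimizers of `φ(x) = |x|^p + (η/2)(x - τ)²` is exactly
`{0, ρ}`. -/
theorem prox_lp_threshold_two_minimizers
    (p η ρ τ : ℝ) (hp0 : 0 < p) (hp1 : p < 1) (hη : 0 < η)
    (hρ : ρ = (2 * (1 - p) / η) ^ ((1 : ℝ) / (2 - p)))
    (hτ : τ = ρ + p * ρ ^ (p - 1) / η) :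
    {x : ℝ | ∀ y : ℝ, |x| ^ p + η / 2 * (x - τ) ^ 2
        ≤ |y| ^ p + η / 2 * (y - τ) ^ 2} = {0, ρ} := by
  have hb : (0 : ℝ) < 2 * (1 - p) / η := by
    have : (0:ℝ) < 1 - p := by linarith
    positivity
  have hρpos : 0 < ρ := by rw [hρ]; exact Real.rpow_pos_of_pos hb _
  have h2p : (2 : ℝ) - p ≠ 0 := by intro h; linarith
  have hkey : ρ ^ ((2 : ℝ) - p) = 2 * (1 - p) / η := by
    rw [hρ, ← Real.rpow_mul hb.le, one_div, inv_mul_cancel₀ h2p, Real.rpow_one]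
  have hrp : 0 < ρ ^ p := Real.rpow_pos_of_pos hρpos p
  have hr1 : ρ ^ (p - 1) * ρ = ρ ^ p := by
    have h := Real.rpow_add_one hρpos.ne' (p - 1)
    rw [show p - 1 + 1 = p by ring] at h
    exact h.symm
  have hr2 : η * (ρ * ρ) = 2 * (1 - p) * ρ ^ p := by
    have h : ρ ^ ((2 : ℝ) - p) * ρ ^ p = ρ * ρ := by
      rw [← Real.rpow_add hρpos, show (2:ℝ) - p + p = ((2:ℕ):ℝ) by push_cast; ring,
        Real.rpow_natCast]
      ring
    rw [← h, hkey]
    field_simp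
  have hτ2 : η * ρ * τ = η * (ρ * ρ) + p * ρ ^ p := by
    rw [hτ]
    field_simp
    linear_combination p * hr1
  have hτpos : 0 < τ := by
    rw [hτ]
    have : 0 < ρ ^ (p - 1) := Real.rpow_pos_of_pos hρpos _
    positivity
  -- key polynomial identity
  have hId : ∀ u : ℝ, ρ ^ p * (1 + p * (u - 1) - (1 - p) * (u - 1) ^ 2)
      + η / 2 * (ρ * u - τ) ^ 2 = ρ ^ p + η / 2 * (ρ - τ) ^ 2 := by
    intro u
    linear_combination ((u - 1) ^ 2 / 2) * hr2 - (u - 1) * hτ2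
  -- value at 0 equals value at ρ
  have hA : |(0:ℝ)| ^ p + η / 2 * ((0:ℝ) - τ) ^ 2 = |ρ| ^ p + η / 2 * (ρ - τ) ^ 2 := by
    have h0 := hId 0
    rw [abs_zero, Real.zero_rpow hp0.ne', abs_of_pos hρpos]
    nlinarith [h0]
  -- inequality for positive x
  have hposle : ∀ x : ℝ, 0 < x →
      ρ ^ p + η / 2 * (ρ - τ) ^ 2 ≤ x ^ p + η / 2 * (x - τ) ^ 2 := by
    intro x hx
    have hu : 0 < x / ρ := by positivity
    have hux : ρ * (x / ρ) = x := by field_simp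
    have hxp : x ^ p = ρ ^ p * (x / ρ) ^ p := by
      rw [← hux, Real.mul_rpow hρpos.le hu.le, hux]
    have hc := core_le hp0 hp1 hu
    have h := hId (x / ρ)
    rw [hux] at h
    nlinarith [mul_le_mul_of_nonneg_left hc hrp.le]
  have hposlt : ∀ x : ℝ, 0 < x → x ≠ ρ →
      ρ ^ p + η / 2 * (ρ - τ) ^ 2 < x ^ p + η / 2 * (x - τ) ^ 2 := by
    intro x hx hxρ
    have hu : 0 < x / ρ := by positivity
    have hu1 : x / ρ ≠ 1 := by
      intro h; apply hxρ; field_simp at h; linarith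
    have hux : ρ * (x / ρ) = x := by field_simp
    have hxp : x ^ p = ρ ^ p * (x / ρ) ^ p := by
      rw [← hux, Real.mul_rpow hρpos.le hu.le, hux]
    have hc := core_lt hp0 hp1 hu hu1
    have h := hId (x / ρ)
    rw [hux] at h
    nlinarith [mul_lt_mul_of_pos_left hc hrp]
  -- inequality for nonpositive x
  have hneg : ∀ x : ℝ, x ≤ 0 →
      η / 2 * ((0:ℝ) - τ) ^ 2 ≤ |x| ^ p + η / 2 * (x - τ) ^ 2 := by
    intro x hx
    have h1 : (0:ℝ) ≤ |x| ^ p := Real.rpow_nonneg (abs_nonneg x) p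
    nlinarith [mul_nonneg hη.le (mul_nonneg (neg_nonneg.mpr hx) hτpos.le)]
  have hneglt : ∀ x : ℝ, x < 0 →
      η / 2 * ((0:ℝ) - τ) ^ 2 < |x| ^ p + η / 2 * (x - τ) ^ 2 := by
    intro x hx
    have h1 : (0:ℝ) < |x| ^ p := Real.rpow_pos_of_pos (abs_pos.mpr hx.ne) p
    nlinarith [mul_nonneg hη.le (mul_nonneg (neg_nonneg.mpr hx.le) hτpos.le)]
  -- φ(0) ≤ φ(y) for all y
  have hmin0 : ∀ y : ℝ, |(0:ℝ)| ^ p + η / 2 * ((0:ℝ) - τ) ^ 2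
      ≤ |y| ^ p + η / 2 * (y - τ) ^ 2 := by
    intro y
    rcases le_or_gt y 0 with hy | hy
    · rw [abs_zero, Real.zero_rpow hp0.ne', zero_add]
      exact hneg y hy
    · rw [hA, abs_of_pos hρpos, abs_of_pos hy]
      exact hposle y hy
  ext x
  simp only [Set.mem_setOf_eq, Set.mem_insert_iff, Set.mem_singleton_iff]
  constructor
  · intro hmin
    by_contra hcon
    push_neg at hcon
    obtain ⟨hx0, hxρ⟩ := hcon
    rcases lt_trichotomy x 0 with hx | hx | hx
    · have h1 := hmin 0
      rw [abs_zero, Real.zero_rpow hp0.ne', zero_add] at h1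
      exact absurd h1 (not_le.mpr (hneglt x hx))
    · exact hx0 hx
    · have h1 := hmin ρ
      rw [abs_of_pos hx, abs_of_pos hρpos] at h1
      exact absurd h1 (not_le.mpr (hposlt x hx hxρ))
  · rintro (rfl | rfl)
    · exact hmin0
    · intro y
      have := hmin0 y
      rwa [hA] at this
end

section
/- Let $0 < p < 1$, $\eta > 0$, $\rho = (2(1-p)/\eta)^{1/(2-p)}$, $\tau = \rho + p\rho^{p-1}/\eta$, and for $t > 0$ define $h(g) = p g^{p-1} + \eta g - \eta t$ on $(0,\infty)$. If $t > \tau$, then $h$ has exactly one zero $g$ in the open interval $(\rho, t)$. -/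
open Real Set

/-- With `ρ = (2(1-p)/η)^{1/(2-p)}` and `τ = ρ + pρ^{p-1}/η`: for `t > τ`,
the stationarity function `h(g) = pg^{p-1} + ηg - ηt` has exactly one zero in
the open interval `(ρ, t)`. -/
theorem prox_lp_unique_zero
    (p η ρ τ : ℝ) (hp0 : 0 < p) (hp1 : p < 1) (hη : 0 < η)
    (hρ : ρ = (2 * (1 - p) / η) ^ ((1 : ℝ) / (2 - p)))
    (hτ : τ = ρ + p * ρ ^ (p - 1) / η)
    (t : ℝ) (ht : τ < t) :
    ∃! g : ℝ, g ∈ Set.Ioo ρ t ∧ p * g ^ (p - 1) + η * g - η * t = 0 := by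
  have hbase : 0 < 2 * (1 - p) / η := div_pos (by linarith) hη
  have hρpos : 0 < ρ := by
    rw [hρ]; exact Real.rpow_pos_of_pos hbase _
  have h2p : (2 : ℝ) - p ≠ 0 := by nlinarith
  -- ρ ^ (p - 2) = (2 * (1 - p) / η)⁻¹
  have hρpow : ρ ^ (p - 2) = (2 * (1 - p) / η)⁻¹ := by
    rw [hρ, ← Real.rpow_mul hbase.le]
    have : (1 : ℝ) / (2 - p) * (p - 2) = -1 := by field_simp; ring
    rw [this, Real.rpow_neg_one]
  set f : ℝ → ℝ := fun x => p * x ^ (p - 1) + η * x with hf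
  -- derivative is positive on (ρ, ∞)
  have hderiv : ∀ x ∈ Set.Ici ρ, HasDerivAt f (p * ((p - 1) * x ^ (p - 1 - 1)) + η * 1) x := by
    intro x hx
    have hxpos : 0 < x := lt_of_lt_of_le hρpos hx
    exact ((Real.hasDerivAt_rpow_const (p := p - 1) (Or.inl hxpos.ne')).const_mul p).add
      ((hasDerivAt_id x).const_mul η)
  have hcont : ContinuousOn f (Set.Ici ρ) :=
    fun x hx => ((hderiv x hx).continuousAt).continuousWithinAt
  have hpos : ∀ x ∈ interior (Set.Ici ρ), 0 < deriv f x := by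
    intro x hx
    rw [interior_Ici] at hx
    have hxρ : ρ < x := hx
    have hxpos : 0 < x := hρpos.trans hxρ
    rw [(hderiv x hxρ.le).deriv]
    have hxe : x ^ (p - 1 - 1) ≤ ρ ^ (p - 2) := by
      have : p - 1 - 1 = p - 2 := by ring
      rw [this]
      exact Real.rpow_le_rpow_of_nonpos hρpos hxρ.le (by linarith)
    have hxnn : 0 < x ^ (p - 1 - 1) := Real.rpow_pos_of_pos hxpos _
    have hρval : ρ ^ (p - 2) = η / (2 * (1 - p)) := by
      rw [hρpow, inv_div]
    rw [hρval] at hxe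
    have h1p : 0 < 1 - p := by linarith
    -- p * (1 - p) * x ^ (p-1-1) ≤ p * (1-p) * η / (2 * (1-p)) = p * η / 2 < η
    have key : p * (1 - p) * x ^ (p - 1 - 1) < η := by
      have h2 : p * (1 - p) * x ^ (p - 1 - 1) ≤ p * (1 - p) * (η / (2 * (1 - p))) := by
        apply mul_le_mul_of_nonneg_left hxe (by positivity)
      have h3 : p * (1 - p) * (η / (2 * (1 - p))) = p * η / 2 := by
        field_simp
      nlinarith
    nlinarith
  have hmono : StrictMonoOn f (Set.Ici ρ) :=
    strictMonoOn_of_deriv_pos (convex_Ici ρ) hcont hpos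
  have hτpos : 0 < τ := by
    rw [hτ]
    have : 0 < p * ρ ^ (p - 1) / η := by
      have := Real.rpow_pos_of_pos hρpos (p - 1); positivity
    linarith
  have htpos : 0 < t := hτpos.trans ht
  have hρt : ρ < t := by
    have : ρ < τ := by
      rw [hτ]
      have : 0 < p * ρ ^ (p - 1) / η := by
        have := Real.rpow_pos_of_pos hρpos (p - 1); positivity
      linarith
    linarith
  have hfρ : f ρ = η * τ := by
    simp only [hf, hτ]
    field_simp
    ring
  have hfρlt : f ρ < η * t := by
    rw [hfρ]; exact (mul_lt_mul_iff_right₀ hη).mpr ht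
  have hfy : η * t < f t := by
    simp only [hf]
    have : 0 < p * t ^ (p - 1) := by
      have := Real.rpow_pos_of_pos htpos (p - 1); positivity
    linarith
  -- existence by IVT
  have hsub : Set.Icc ρ t ⊆ Set.Ici ρ := fun x hx => hx.1
  have hivt := intermediate_value_Ioo hρt.le (hcont.mono hsub)
  obtain ⟨g, hgmem, hgval⟩ := hivt ⟨hfρlt, hfy⟩
  refine ⟨g, ⟨hgmem, by simp only [hf] at hgval; linarith⟩, ?_⟩
  intro y ⟨hymem, hyval⟩
  have h1 : f y = η * t := by simp only [hf]; linarith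
  have h2 : f g = η * t := hgval
  exact hmono.injOn (Set.mem_Ici.mpr hymem.1.le) (Set.mem_Ici.mpr hgmem.1.le) (h1.trans h2.symm)
end

section
/- Let $0 < p < 1$, $\eta > 0$, $\rho = (2(1-p)/\eta)^{1/(2-p)}$ and $\tau = \rho + p\rho^{p-1}/\eta$. For $t > \tau$, let $g$ be the unique zero in $(\rho, t)$ of $h(g) = p g^{p-1} + \eta g - \eta t$. Then $g$ is the unique global minimizer over $\mathbb{R}$ of $\varphi(x) = |x|^p + \tfrac{\eta}{2}(x-t)^2$; that is, $\mathrm{prox}_{p,\eta}(t) = g$. -/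
open Real

lemma rpow_tangent_aux (p : ℝ) (hp0 : 0 < p) (hp1 : p < 1) {g x : ℝ}
    (hg : 0 < g) (hx : 0 ≤ x) :
    x * (g ^ (p - 1) + (p - 1) * g ^ (p - 2) * (x - g)) ≤ x ^ p := by
  rcases eq_or_lt_of_le hx with h0 | hx'
  · rw [← h0, Real.zero_rpow hp0.ne']; norm_num
  have hxg : 0 < x / g := div_pos hx' hg
  have h1s : 1 + (x / g - 1) = x / g := by ring
  have hs : -1 ≤ x / g - 1 := by linarith
  have h1 : (1 + (x / g - 1)) ^ (1 - p) ≤ 1 + (1 - p) * (x / g - 1) :=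
    rpow_one_add_le_one_add_mul_self hs (by linarith) (by linarith)
  have hb : 0 < (1 + (x / g - 1)) ^ (1 - p) := rpow_pos_of_pos (by rw [h1s]; exact hxg) _
  have hc : 0 < 1 + (1 - p) * (x / g - 1) := lt_of_lt_of_le hb h1
  have hbinv : (1 + (1 - p) * (x / g - 1))⁻¹ ≤ ((1 + (x / g - 1)) ^ (1 - p))⁻¹ :=
    inv_anti₀ hb h1
  have hcinv : 2 - (1 + (1 - p) * (x / g - 1)) ≤ (1 + (1 - p) * (x / g - 1))⁻¹ := by
    have h8 : (2 - (1 + (1 - p) * (x / g - 1))) * (1 + (1 - p) * (x / g - 1))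
        ≤ (1 + (1 - p) * (x / g - 1))⁻¹ * (1 + (1 - p) * (x / g - 1)) := by
      rw [inv_mul_cancel₀ hc.ne']
      nlinarith [sq_nonneg ((1 - p) * (x / g - 1))]
    exact le_of_mul_le_mul_right h8 hc
  have h3 : (1 + (x / g - 1)) ^ (p - 1) = ((1 + (x / g - 1)) ^ (1 - p))⁻¹ := by
    have he : p - 1 = -(1 - p) := by ring
    rw [he, Real.rpow_neg (by rw [h1s]; exact hxg.le)]
  have h4 : 1 + (p - 1) * (x / g - 1) ≤ (1 + (x / g - 1)) ^ (p - 1) := by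
    rw [h3]
    calc 1 + (p - 1) * (x / g - 1) = 2 - (1 + (1 - p) * (x / g - 1)) := by ring
    _ ≤ (1 + (1 - p) * (x / g - 1))⁻¹ := hcinv
    _ ≤ ((1 + (x / g - 1)) ^ (1 - p))⁻¹ := hbinv
  have h5 : (1 + (x / g - 1)) ^ (p - 1) = x ^ (p - 1) / g ^ (p - 1) := by
    rw [h1s, Real.div_rpow hx hg.le]
  have hgp : 0 < g ^ (p - 1) := rpow_pos_of_pos hg _
  have h6 : x * g ^ (p - 1) * (1 + (p - 1) * (x / g - 1)) ≤ x * x ^ (p - 1) := by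
    have h7 := mul_le_mul_of_nonneg_left h4 (le_of_lt (mul_pos hx' hgp))
    rw [h5] at h7
    calc x * g ^ (p - 1) * (1 + (p - 1) * (x / g - 1))
        ≤ x * g ^ (p - 1) * (x ^ (p - 1) / g ^ (p - 1)) := h7
      _ = x * x ^ (p - 1) := by field_simp
  have hxp : x * x ^ (p - 1) = x ^ p := by
    rw [mul_comm, ← Real.rpow_add_one hx'.ne' (p - 1)]; congr 1; ring
  have hG1 : g ^ (p - 1) = g ^ (p - 2) * g := by
    rw [← Real.rpow_add_one hg.ne' (p - 2)]; congr 1; ring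
  calc x * (g ^ (p - 1) + (p - 1) * g ^ (p - 2) * (x - g))
      = x * g ^ (p - 1) * (1 + (p - 1) * (x / g - 1)) := by
        rw [hG1]; field_simp
    _ ≤ x * x ^ (p - 1) := h6
    _ = x ^ p := hxp

/-- With `ρ = (2(1-p)/η)^{1/(2-p)}` and `τ = ρ + pρ^{p-1}/η`: for `t > τ`, the
zero `g ∈ (ρ, t)` of `h(g) = pg^{p-1} + ηg - ηt` is the unique global
minimizer of `φ(x) = |x|^p + (η/2)(x - t)²`, i.e. `prox_{p,η}(t) = g`. -/
theorem prox_lp_nonzero_branch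
    (p η ρ τ : ℝ) (hp0 : 0 < p) (hp1 : p < 1) (hη : 0 < η)
    (hρ : ρ = (2 * (1 - p) / η) ^ ((1 : ℝ) / (2 - p)))
    (hτ : τ = ρ + p * ρ ^ (p - 1) / η)
    (t : ℝ) (ht : τ < t)
    (g : ℝ) (hg : g ∈ Set.Ioo ρ t)
    (hzero : p * g ^ (p - 1) + η * g - η * t = 0) :
    (∀ x : ℝ, |g| ^ p + η / 2 * (g - t) ^ 2 ≤ |x| ^ p + η / 2 * (x - t) ^ 2) ∧
    ∀ x : ℝ, (∀ y : ℝ, |x| ^ p + η / 2 * (x - t) ^ 2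
        ≤ |y| ^ p + η / 2 * (y - t) ^ 2) → x = g := by
  obtain ⟨hρg, hgt⟩ := hg
  have hA : 0 < 2 * (1 - p) / η := div_pos (by linarith) hη
  have hρ0 : 0 < ρ := hρ ▸ rpow_pos_of_pos hA _
  have hg0 : 0 < g := hρ0.trans hρg
  have ht0 : 0 < t := by
    have h1 : 0 < p * ρ ^ (p - 1) / η :=
      div_pos (mul_pos hp0 (rpow_pos_of_pos hρ0 _)) hη
    have : 0 < τ := by rw [hτ]; linarith
    linarith
  have h2p : (2 : ℝ) - p ≠ 0 := by intro h; linarith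
  have hρp2 : ρ ^ (p - 2) = η / (2 * (1 - p)) := by
    rw [hρ, ← Real.rpow_mul hA.le]
    have he : (1 : ℝ) / (2 - p) * (p - 2) = -1 := by field_simp; ring
    rw [he, Real.rpow_neg_one, inv_div]
  have hgap : (1 - p) * g ^ (p - 2) < η / 2 := by
    have h1 : g ^ (p - 2) < ρ ^ (p - 2) :=
      Real.rpow_lt_rpow_of_neg hρ0 hρg (by linarith)
    rw [hρp2] at h1
    have h2 : (1 - p) * g ^ (p - 2) < (1 - p) * (η / (2 * (1 - p))) :=
      mul_lt_mul_of_pos_left h1 (by linarith)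
    have h1p : (1 : ℝ) - p ≠ 0 := by intro h; linarith
    have h3 : (1 - p) * (η / (2 * (1 - p))) = η / 2 := by
      field_simp
    linarith
  have hG1 : g ^ (p - 1) = g ^ (p - 2) * g := by
    rw [← Real.rpow_add_one hg0.ne' (p - 2)]; congr 1; ring
  have hG0 : g ^ p = g ^ (p - 2) * g ^ 2 := by
    rw [← Real.rpow_natCast g 2, ← Real.rpow_add hg0 (p - 2)]; congr 1; ring
  -- key estimate for nonneg x
  have key : ∀ x : ℝ, 0 ≤ x →
      g ^ p + η / 2 * (g - t) ^ 2 + (η / 2 - (1 - p) * g ^ (p - 2)) * (x - g) ^ 2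
        ≤ x ^ p + η / 2 * (x - t) ^ 2 := by
    intro x hx
    have hT := rpow_tangent_aux p hp0 hp1 hg0 hx
    have hident : g ^ p + η / 2 * (g - t) ^ 2
        + (η / 2 - (1 - p) * g ^ (p - 2)) * (x - g) ^ 2
        = η / 2 * (x - t) ^ 2
          + x * (g ^ (p - 1) + (p - 1) * g ^ (p - 2) * (x - g)) := by
      linear_combination (g - x) * hzero + hG0 + (-x + p * (x - g)) * hG1
    linarith
  have hcoef : 0 < η / 2 - (1 - p) * g ^ (p - 2) := by linarith
  have key_le : ∀ x : ℝ, 0 ≤ x →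
      g ^ p + η / 2 * (g - t) ^ 2 ≤ x ^ p + η / 2 * (x - t) ^ 2 := by
    intro x hx
    have := key x hx
    nlinarith [mul_nonneg hcoef.le (sq_nonneg (x - g))]
  have key_lt : ∀ x : ℝ, 0 ≤ x → x ≠ g →
      g ^ p + η / 2 * (g - t) ^ 2 < x ^ p + η / 2 * (x - t) ^ 2 := by
    intro x hx hne
    have hsq : 0 < (x - g) ^ 2 := by
      have := sub_ne_zero.mpr hne
      positivity
    have := key x hx
    nlinarith [mul_pos hcoef hsq]
  -- negative x, strict
  have key_neg : ∀ x : ℝ, x < 0 →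
      g ^ p + η / 2 * (g - t) ^ 2 < (-x) ^ p + η / 2 * (x - t) ^ 2 := by
    intro x hx
    have h1 := key_le (-x) (by linarith)
    have h2 : 0 < (-x) * t := mul_pos (by linarith) ht0
    nlinarith
  constructor
  · intro x
    rw [abs_of_pos hg0]
    rcases le_or_gt 0 x with hx | hx
    · rw [abs_of_nonneg hx]; exact key_le x hx
    · rw [abs_of_neg hx]; exact (key_neg x hx).le
  · intro x hmin
    by_contra hne
    have h1 := hmin g
    rw [abs_of_pos hg0] at h1
    have h2 : g ^ p + η / 2 * (g - t) ^ 2 < |x| ^ p + η / 2 * (x - t) ^ 2 := by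
      rcases le_or_gt 0 x with hx | hx
      · rw [abs_of_nonneg hx]; exact key_lt x hx hne
      · rw [abs_of_neg hx]; exact key_neg x hx
    linarith
end
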